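/- A submanifold M of the gradient shrinking Ricci soliton R^p × S^k_{√(2(k-1))} (with f(x,y) = |x|²/4) is a self-shrinker if and only if the cartesian coordinates x₁,…,x_p of R^p restricted to M satisfy Δ_f x_i = −(1/2)x_i, and the cartesian coordinates y₁,…,y_{k+1} of R^{k+1} restricted to M satisfy Δ_f y_i = −( (1/(2(k−1))) tr_M g_{S^k} ) y_i, where tr_M g_{S^k} is the trace over the tangent space of M of the pullback of the metric of the spherical factor. -/

import Mathlib

/-!
Common differential-geometric definitions, built from scratch on top of Mathlib.

A submanifold is modelled as a smooth manifold `M` (charted over `EuclideanSpace ℝ (Fin m)`)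
together with a smooth immersion `F : M → EuclideanSpace ℝ (Fin N)`.  All first and second
order geometric quantities (induced metric, second fundamental form, mean curvature vector,
Laplace-Beltrami operator, drifted Laplacian, Ricci/scalar curvature via the Gauss equation,
etc.) are defined in the local parametrization `F ∘ (extChartAt (𝓡 m) p).symm` at the point
`chpt m p = extChartAt (𝓡 m) p p`.
-/

noncomputable section

open scoped RealInnerProductSpace Manifold ENNReal NNReal
open MeasureTheory Filter

abbrev Euc (N : ℕ) : Type := EuclideanSpace ℝ (Fin N)

namespace ShrinkerPaper

variable {m N : ℕ}

/-- `i`-th standard basis vector of `ℝ^m`. -/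
def ebasis (m : ℕ) (i : Fin m) : Euc m := EuclideanSpace.single i (1 : ℝ)

/-- First partial derivative of a parametrization. -/
def pder (φ : Euc m → Euc N) (i : Fin m) (x : Euc m) : Euc N :=
  fderiv ℝ φ x (ebasis m i)

/-- Second partial derivative of a parametrization. -/
def pder2 (φ : Euc m → Euc N) (i j : Fin m) (x : Euc m) : Euc N :=
  fderiv ℝ (fun y => pder φ i y) x (ebasis m j)

/-- First partial derivative of a scalar function. -/
def spder (w : Euc m → ℝ) (i : Fin m) (x : Euc m) : ℝ :=
  fderiv ℝ w x (ebasis m i)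

/-- Second partial derivative of a scalar function. -/
def spder2 (w : Euc m → ℝ) (i j : Fin m) (x : Euc m) : ℝ :=
  fderiv ℝ (fun y => spder w i y) x (ebasis m j)

/-- Induced metric (first fundamental form) in a parametrization. -/
def gram (φ : Euc m → Euc N) (x : Euc m) : Matrix (Fin m) (Fin m) ℝ :=
  Matrix.of fun i j => ⟪pder φ i x, pder φ j x⟫

/-- Inverse induced metric. -/
def ginv (φ : Euc m → Euc N) (x : Euc m) : Matrix (Fin m) (Fin m) ℝ :=
  (gram φ x)⁻¹

/-- Tangent space of the immersed submanifold, as a subspace of the ambient Euclidean space. -/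
def tanSpace (φ : Euc m → Euc N) (x : Euc m) : Submodule ℝ (Euc N) :=
  LinearMap.range (fderiv ℝ φ x : Euc m →ₗ[ℝ] Euc N)

/-- Orthogonal projection onto the tangent space. -/
def tproj (φ : Euc m → Euc N) (x : Euc m) (v : Euc N) : Euc N :=
  (Submodule.orthogonalProjection (tanSpace φ x) v : Euc N)

/-- Orthogonal projection onto the normal space (`v ↦ v^⊥`). -/
def nproj (φ : Euc m → Euc N) (x : Euc m) (v : Euc N) : Euc N :=
  v - tproj φ x v

/-- Vector-valued second fundamental form in a parametrization. -/
def sff (φ : Euc m → Euc N) (x : Euc m) (i j : Fin m) : Euc N :=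
  nproj φ x (pder2 φ i j x)

/-- Mean curvature vector `H⃗ = ∑ g^{ij} (∂_i∂_j φ)^⊥` in a parametrization. -/
def meanCurvCoord (φ : Euc m → Euc N) (x : Euc m) : Euc N :=
  ∑ i, ∑ j, ginv φ x i j • sff φ x i j

/-- Christoffel symbols `Γ^l_{ij}` of the induced metric. -/
def christoffel (φ : Euc m → Euc N) (x : Euc m) (l i j : Fin m) : ℝ :=
  ∑ r, ginv φ x l r * ⟪pder2 φ i j x, pder φ r x⟫

/-- Laplace-Beltrami operator of the induced metric, in a parametrization:
`Δ w = g^{ij} (∂_i∂_j w - Γ^l_{ij} ∂_l w)`. -/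
def lapCoord (φ : Euc m → Euc N) (w : Euc m → ℝ) (x : Euc m) : ℝ :=
  ∑ i, ∑ j, ginv φ x i j *
    (spder2 w i j x - ∑ l, christoffel φ x l i j * spder w l x)

/-- Inner product of intrinsic gradients: `⟨∇w₁, ∇w₂⟩ = g^{ij} ∂_i w₁ ∂_j w₂`. -/
def gradInnerCoord (φ : Euc m → Euc N) (w₁ w₂ : Euc m → ℝ) (x : Euc m) : ℝ :=
  ∑ i, ∑ j, ginv φ x i j * spder w₁ i x * spder w₂ j x

/-- Hessian `∇∇w` of the induced metric, in a parametrization. -/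
def hessCoord (φ : Euc m → Euc N) (w : Euc m → ℝ) (x : Euc m) (i j : Fin m) : ℝ :=
  spder2 w i j x - ∑ l, christoffel φ x l i j * spder w l x

/-- Ricci curvature of the induced metric (via the Gauss equation, valid for
isometrically immersed submanifolds of Euclidean space). -/
def ricCoord (φ : Euc m → Euc N) (x : Euc m) (i j : Fin m) : ℝ :=
  ∑ a, ∑ b, ginv φ x a b *
    (⟪sff φ x a b, sff φ x i j⟫ - ⟪sff φ x a i, sff φ x b j⟫)

/-- Scalar curvature of the induced metric. -/
def scalCoord (φ : Euc m → Euc N) (x : Euc m) : ℝ :=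
  ∑ i, ∑ j, ginv φ x i j * ricCoord φ x i j

/-- Coordinates (w.r.t. the frame `∂_i φ`) of an ambient vector tangent to the submanifold. -/
def coordsOf (φ : Euc m → Euc N) (x : Euc m) (u : Euc N) (i : Fin m) : ℝ :=
  ∑ j, ginv φ x i j * ⟪u, pder φ j x⟫

/-! ### Manifold-level definitions -/

/-- The canonical local parametrization of the immersion `F` around `p`. -/
def chmap (m : ℕ) {N : ℕ} {M : Type*} [TopologicalSpace M] [ChartedSpace (Euc m) M]
    (F : M → Euc N) (p : M) : Euc m → Euc N :=
  F ∘ (extChartAt (𝓡 m) p).symm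

/-- The coordinate representation of the point `p`. -/
def chpt (m : ℕ) {M : Type*} [TopologicalSpace M] [ChartedSpace (Euc m) M] (p : M) : Euc m :=
  extChartAt (𝓡 m) p p

/-- Local coordinate representation of a scalar function on `M` around `p`. -/
def pull (m : ℕ) {M : Type*} [TopologicalSpace M] [ChartedSpace (Euc m) M]
    (u : M → ℝ) (p : M) : Euc m → ℝ :=
  u ∘ (extChartAt (𝓡 m) p).symm

/-- Mean curvature vector of the immersion `F` at `p`. -/
def mcv (m : ℕ) {N : ℕ} {M : Type*} [TopologicalSpace M] [ChartedSpace (Euc m) M]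
    (F : M → Euc N) (p : M) : Euc N :=
  meanCurvCoord (chmap m F p) (chpt m p)

/-- Tangent space of the immersion `F` at `p`, as a subspace of the ambient space. -/
def tangentAt (m : ℕ) {N : ℕ} {M : Type*} [TopologicalSpace M] [ChartedSpace (Euc m) M]
    (F : M → Euc N) (p : M) : Submodule ℝ (Euc N) :=
  tanSpace (chmap m F p) (chpt m p)

/-- Projection of an ambient vector onto the normal space of `F` at `p`. -/
def nprojAt (m : ℕ) {N : ℕ} {M : Type*} [TopologicalSpace M] [ChartedSpace (Euc m) M]
    (F : M → Euc N) (p : M) (v : Euc N) : Euc N :=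
  nproj (chmap m F p) (chpt m p) v

/-- Laplace-Beltrami operator (of the metric induced by `F`) applied to `u : M → ℝ`. -/
def lapM (m : ℕ) {N : ℕ} {M : Type*} [TopologicalSpace M] [ChartedSpace (Euc m) M]
    (F : M → Euc N) (u : M → ℝ) (p : M) : ℝ :=
  lapCoord (chmap m F p) (pull m u p) (chpt m p)

/-- Squared norm of the intrinsic gradient `|∇u|²` of `u : M → ℝ`. -/
def gradSq (m : ℕ) {N : ℕ} {M : Type*} [TopologicalSpace M] [ChartedSpace (Euc m) M]
    (F : M → Euc N) (u : M → ℝ) (p : M) : ℝ :=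
  gradInnerCoord (chmap m F p) (pull m u p) (pull m u p) (chpt m p)

/-- Inner product of intrinsic gradients of two functions on `M`. -/
def gradInnerM (m : ℕ) {N : ℕ} {M : Type*} [TopologicalSpace M] [ChartedSpace (Euc m) M]
    (F : M → Euc N) (u v : M → ℝ) (p : M) : ℝ :=
  gradInnerCoord (chmap m F p) (pull m u p) (pull m v p) (chpt m p)

/-- Drifted Laplacian `Δ_f u = Δ u - ⟨∇f, ∇u⟩` on `M`. -/
def driftLap (m : ℕ) {N : ℕ} {M : Type*} [TopologicalSpace M] [ChartedSpace (Euc m) M]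
    (F : M → Euc N) (fM u : M → ℝ) (p : M) : ℝ :=
  lapM m F u p - gradInnerM m F fM u p

/-- `F : M → ℝ^N` is a smooth immersion. -/
def IsSmoothImmersion (m : ℕ) {N : ℕ} {M : Type*} [TopologicalSpace M]
    [ChartedSpace (Euc m) M] (F : M → Euc N) : Prop :=
  ContMDiff (𝓡 m) 𝓘(ℝ, Euc N) (⊤ : ℕ∞) F ∧
    ∀ p : M, Function.Injective (mfderiv (𝓡 m) 𝓘(ℝ, Euc N) F p)

/-- The self-shrinker equation `H⃗ + (1/2) x^⊥ = 0` at `p`. -/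
def EucShrinkEqnAt (m : ℕ) {N : ℕ} {M : Type*} [TopologicalSpace M]
    [ChartedSpace (Euc m) M] (F : M → Euc N) (p : M) : Prop :=
  mcv m F p + (2⁻¹ : ℝ) • nprojAt m F p (F p) = 0

/-- A self-shrinker immersed in Euclidean space: `H⃗ + (1/2) x^⊥ = 0`. -/
def IsEucSelfShrinker (m : ℕ) {N : ℕ} {M : Type*} [TopologicalSpace M]
    [ChartedSpace (Euc m) M] (F : M → Euc N) : Prop :=
  IsSmoothImmersion m F ∧ ∀ p : M, EucShrinkEqnAt m F p

/-- `μ` is the Riemannian volume measure of the metric induced by `F`: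
in every chart it is given by `√(det g) dx`. -/
def IsRiemannVolume (m : ℕ) {N : ℕ} {M : Type*} [TopologicalSpace M]
    [ChartedSpace (Euc m) M] [MeasurableSpace M] (F : M → Euc N) (μ : Measure M) : Prop :=
  ∀ p : M, ∀ A : Set M, MeasurableSet A → A ⊆ (extChartAt (𝓡 m) p).source →
    μ A = ∫⁻ x in (extChartAt (𝓡 m) p) '' A,
      ENNReal.ofReal (Real.sqrt ((gram (chmap m F p) x).det))

/-- The weighted measure `e^{-f} dvol`. -/
def wMeasure {M : Type*} [MeasurableSpace M] (μ : Measure M) (fM : M → ℝ) : Measure M :=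
  μ.withDensity fun p => ENNReal.ofReal (Real.exp (-(fM p)))

/-! ### The splitting `ℝ^{a+b} = ℝ^a × ℝ^b` and the round cylinder `ℝ^a × S^{b-1}_R` -/

/-- `⟨x-part of z, v⟩` for `v ∈ ℝ^a`. -/
def xdot (a b : ℕ) (z : Euc (a + b)) (v : Euc a) : ℝ :=
  ∑ i : Fin a, z (Fin.castAdd b i) * v i

/-- `⟨x-part of z, x-part of v⟩`. -/
def xpairing (a b : ℕ) (z v : Euc (a + b)) : ℝ :=
  ∑ i : Fin a, z (Fin.castAdd b i) * v (Fin.castAdd b i)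

/-- `|x-part of z|²`. -/
def xnormSq (a b : ℕ) (z : Euc (a + b)) : ℝ :=
  ∑ i : Fin a, (z (Fin.castAdd b i)) ^ 2

/-- `⟨y-part of z, y-part of w⟩`. -/
def yinner (a b : ℕ) (z w : Euc (a + b)) : ℝ :=
  ∑ j : Fin b, z (Fin.natAdd a j) * w (Fin.natAdd a j)

/-- `|y-part of z|²`. -/
def ynormSq (a b : ℕ) (z : Euc (a + b)) : ℝ :=
  ∑ j : Fin b, (z (Fin.natAdd a j)) ^ 2

/-- The `ℝ^a`-component of `z ∈ ℝ^{a+b}`. -/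
def xpartVec (a b : ℕ) (z : Euc (a + b)) : Euc a :=
  WithLp.toLp 2 (fun i => z (Fin.castAdd b i))

/-- `(x, 0) ∈ ℝ^{a+b}` where `x` is the `ℝ^a`-component of `z`. -/
def xembed (a b : ℕ) (z : Euc (a + b)) : Euc (a + b) :=
  WithLp.toLp 2 ((fun i => Fin.addCases (fun i₁ => z (Fin.castAdd b i₁)) (fun _ => 0) i) : Fin (a + b) → ℝ)

/-- `(0, y) ∈ ℝ^{a+b}` where `y` is the `ℝ^b`-component of `z`. -/
def yembed (a b : ℕ) (z : Euc (a + b)) : Euc (a + b) :=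
  WithLp.toLp 2 ((fun i => Fin.addCases (fun _ => 0) (fun j => z (Fin.natAdd a j)) i) : Fin (a + b) → ℝ)

/-- The round cylinder `ℝ^a × S^{b-1}_R ⊆ ℝ^{a+b}`. -/
def cylSet (a b : ℕ) (R : ℝ) : Set (Euc (a + b)) := {z | ynormSq a b z = R ^ 2}

/-- Orthogonal projection of an ambient vector `v` onto the tangent space of the
cylinder at the point `z` (i.e. removing the radial component of the sphere factor). -/
def projCylT (a b : ℕ) (z v : Euc (a + b)) : Euc (a + b) :=
  v - (yinner a b v z / ynormSq a b z) • yembed a b z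

/-- `∑_{i<j} x_i²` (sum of squares of the first `j` of the `ℝ^a`-coordinates). -/
def sumXSq (a b : ℕ) (j : ℕ) (z : Euc (a + b)) : ℝ :=
  ∑ i : Fin a, if (i : ℕ) < j then (z (Fin.castAdd b i)) ^ 2 else 0

/-- The `f`-minimal (self-shrinker) equation in the cylinder `ℝ^a × S^{b-1}_R` with
`f(x,y) = |x|²/4`:  `H⃗ + ((∇̄f)^{⊥_M}) = 0`, where `H⃗` is the mean curvature vector of
`M` inside the cylinder (the projection onto the tangent space of the cylinder of the full
Euclidean mean curvature vector) and `(∇̄f)^{⊥_M}` is the component of `∇̄f = (x/2, 0)`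
orthogonal to `T_pM`. -/
def CylShrinkEqnAt (a b m : ℕ) {M : Type*} [TopologicalSpace M]
    [ChartedSpace (Euc m) M] (F : M → Euc (a + b)) (p : M) : Prop :=
  projCylT a b (F p) (mcv m F p) + nprojAt m F p ((2⁻¹ : ℝ) • xembed a b (F p)) = 0

/-- A self-shrinker (`f`-minimal) submanifold immersed in the gradient shrinking Ricci
soliton `ℝ^a × S^{b-1}_R` (with `f(x,y) = |x|²/4`). -/
def IsCylSelfShrinker (a b m : ℕ) (R : ℝ) {M : Type*} [TopologicalSpace M]
    [ChartedSpace (Euc m) M] (F : M → Euc (a + b)) : Prop :=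
  IsSmoothImmersion m F ∧ (∀ p : M, F p ∈ cylSet a b R) ∧ ∀ p : M, CylShrinkEqnAt a b m F p

/-- `tr_M g_{S^{b-1}}` : the trace over the tangent space of `M` of the pullback of the
metric of the spherical factor. -/
def sphTrace (a b m : ℕ) {M : Type*} [TopologicalSpace M]
    [ChartedSpace (Euc m) M] (F : M → Euc (a + b)) (p : M) : ℝ :=
  ∑ i, ∑ j, ginv (chmap m F p) (chpt m p) i j *
    yinner a b (pder (chmap m F p) i (chpt m p)) (pder (chmap m F p) j (chpt m p))

/-! ### An abstract ambient manifold realized isometrically in Euclidean space -/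

/-- Intrinsic gradient of `f : B → ℝ` on the (ambient) manifold `B` isometrically
immersed in `ℝ^N` by `G`, viewed as a vector of `ℝ^N` tangent to `B`. -/
def ambGrad (d : ℕ) {N : ℕ} {B : Type*} [TopologicalSpace B] [ChartedSpace (Euc d) B]
    (G : B → Euc N) (f : B → ℝ) (q : B) : Euc N :=
  ∑ i, ∑ j, (ginv (chmap d G q) (chpt d q) i j * spder (pull d f q) j (chpt d q)) •
    pder (chmap d G q) i (chpt d q)

/-- Hessian `∇∇f` of the manifold `(B, G)` in the canonical chart at `q`. -/
def ambHessMat (d : ℕ) {N : ℕ} {B : Type*} [TopologicalSpace B] [ChartedSpace (Euc d) B]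
    (G : B → Euc N) (f : B → ℝ) (q : B) (i j : Fin d) : ℝ :=
  hessCoord (chmap d G q) (pull d f q) (chpt d q) i j

/-- Hessian `∇∇f(u,v)` evaluated on ambient vectors `u, v` tangent to `B` at `q`. -/
def ambHess (d : ℕ) {N : ℕ} {B : Type*} [TopologicalSpace B] [ChartedSpace (Euc d) B]
    (G : B → Euc N) (f : B → ℝ) (q : B) (u v : Euc N) : ℝ :=
  ∑ i, ∑ j, ambHessMat d G f q i j *
    coordsOf (chmap d G q) (chpt d q) u i * coordsOf (chmap d G q) (chpt d q) v j

/-- Ricci curvature of `(B, G)` in the canonical chart at `q`. -/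
def ricAt (d : ℕ) {N : ℕ} {B : Type*} [TopologicalSpace B] [ChartedSpace (Euc d) B]
    (G : B → Euc N) (q : B) (i j : Fin d) : ℝ :=
  ricCoord (chmap d G q) (chpt d q) i j

/-- Scalar curvature of `(B, G)` at `q`. -/
def scalAt (d : ℕ) {N : ℕ} {B : Type*} [TopologicalSpace B] [ChartedSpace (Euc d) B]
    (G : B → Euc N) (q : B) : ℝ :=
  scalCoord (chmap d G q) (chpt d q)

/-- `(B, g, f)` (with `g` the metric induced by the isometric immersion `G` — by the Nash
embedding theorem this entails no loss of generality) is a gradient shrinking Ricci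
soliton: `Ric + ∇∇f = c g` with `c > 0`. -/
def IsGradShrinkSoliton (d : ℕ) {N : ℕ} {B : Type*} [TopologicalSpace B]
    [ChartedSpace (Euc d) B] (G : B → Euc N) (f : B → ℝ) (c : ℝ) : Prop :=
  IsSmoothImmersion d G ∧ ContMDiff (𝓡 d) 𝓘(ℝ, ℝ) (⊤ : ℕ∞) f ∧ 0 < c ∧
    ∀ q : B, ∀ i j : Fin d,
      ricAt d G q i j + ambHessMat d G f q i j = c * gram (chmap d G q) (chpt d q) i j

/-- `ι : M → B` is a smooth immersion which is `f`-minimal: `H⃗ + (∇̄f)^⊥ = 0`, where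
`H⃗` is the mean curvature vector of `M` in `B` (the projection onto `T B` of the full
Euclidean mean curvature vector of `G ∘ ι`) and `⊥` is the projection onto the normal
bundle of `M` in `B`. -/
def IsFMinimalIn (d m : ℕ) {N : ℕ} {B : Type*} [TopologicalSpace B]
    [ChartedSpace (Euc d) B] {M : Type*} [TopologicalSpace M] [ChartedSpace (Euc m) M]
    (G : B → Euc N) (f : B → ℝ) (ι : M → B) : Prop :=
  ContMDiff (𝓡 m) (𝓡 d) (⊤ : ℕ∞) ι ∧ IsSmoothImmersion m (G ∘ ι) ∧
    ∀ p : M,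
      ((Submodule.orthogonalProjection (tangentAt d G (ι p)) (mcv m (G ∘ ι) p) : Euc N)) +
        nprojAt m (G ∘ ι) p (ambGrad d G f (ι p)) = 0

end ShrinkerPaper

/-!
The coordinate functions of an immersion satisfy `Δ x = H⃗` and `⟨∇f, ∇x⟩ = (∇̄f)^⊤`, so
`Δ_f x = H⃗ - (∇̄f)^⊤` componentwise. Projecting `H⃗` onto the cylinder only removes its component
along `(0, y)`, and differentiating `|y|² = R²` twice along `M` gives `⟨H⃗, (0, y)⟩ = -tr_M g_S`.
Hence the shrinker equation reads, coordinate by coordinate, `Δ_f x_i = -x_i / 2` and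
`Δ_f y_j = -(tr_M g_S / R²) y_j`.
-/

namespace ShrinkerPaper

variable {m N : ℕ}

section Frame

variable (φ : Euc m → Euc N) (x : Euc m)

lemma ebasis_eq_basisFun (i : Fin m) : ebasis m i = EuclideanSpace.basisFun (Fin m) ℝ i := by
  rw [EuclideanSpace.basisFun_apply, ebasis]

lemma fderiv_apply_eq_sum_pder (v : Euc m) : fderiv ℝ φ x v = ∑ i, v i • pder φ i x := by
  conv_lhs => rw [← (EuclideanSpace.basisFun (Fin m) ℝ).sum_repr v]
  simp [map_sum, pder, ebasis_eq_basisFun]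

lemma pder_mem_tanSpace (i : Fin m) : pder φ i x ∈ tanSpace φ x :=
  LinearMap.mem_range.2 ⟨ebasis m i, rfl⟩

lemma tproj_mem_tanSpace (v : Euc N) : tproj φ x v ∈ tanSpace φ x :=
  Submodule.starProjection_apply_mem _ v

lemma gram_eq_matrixGram : gram φ x = Matrix.gram ℝ (fun i => pder φ i x) := rfl

lemma ginv_symm (i j : Fin m) : ginv φ x i j = ginv φ x j i := by
  have h : (gram φ x).IsSymm :=
    Matrix.IsSymm.ext fun i j => real_inner_comm (pder φ i x) (pder φ j x)
  exact (Matrix.IsSymm.inv h).apply j i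

variable {φ x}

lemma isUnit_det_gram (hinj : Function.Injective (fderiv ℝ φ x)) : IsUnit (gram φ x).det := by
  rw [isUnit_iff_ne_zero, gram_eq_matrixGram, Matrix.det_gram_ne_zero_iff_linearIndependent]
  have := ((EuclideanSpace.basisFun (Fin m) ℝ).toBasis.linearIndependent).map'
    (fderiv ℝ φ x : Euc m →ₗ[ℝ] Euc N) (LinearMap.ker_eq_bot.2 hinj)
  simpa [Function.comp_def, pder, ebasis_eq_basisFun] using this

lemma sum_ginv_mulVec_mul_gram (hdet : IsUnit (gram φ x).det) (b : Fin m → ℝ) (s : Fin m) :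
    ∑ l, (ginv φ x).mulVec b l * gram φ x l s = b s := by
  have hG : ∀ l, gram φ x l s = gram φ x s l := fun l => real_inner_comm (pder φ s x) (pder φ l x)
  calc ∑ l, (ginv φ x).mulVec b l * gram φ x l s = (gram φ x).mulVec ((ginv φ x).mulVec b) s := by
        simp only [hG, Matrix.mulVec, dotProduct]
        exact Finset.sum_congr rfl fun l _ => mul_comm _ _
    _ = b s := by rw [Matrix.mulVec_mulVec, ginv, Matrix.mul_nonsing_inv _ hdet, Matrix.one_mulVec]

lemma tproj_eq_sum (hdet : IsUnit (gram φ x).det) (v : Euc N) :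
    tproj φ x v = ∑ l, (ginv φ x).mulVec (fun r => ⟪v, pder φ r x⟫) l • pder φ l x := by
  refine Submodule.eq_starProjection_of_mem_of_inner_eq_zero
    (Submodule.sum_mem _ fun l _ => Submodule.smul_mem _ _ (pder_mem_tanSpace φ x l)) ?_
  rintro _ ⟨w, rfl⟩
  have hw : ∀ s, ⟪v - ∑ l, (ginv φ x).mulVec (fun r => ⟪v, pder φ r x⟫) l • pder φ l x,
      pder φ s x⟫ = 0 := fun s => by
    simp only [inner_sub_left, sum_inner, real_inner_smul_left]
    exact sub_eq_zero.2 (sum_ginv_mulVec_mul_gram hdet (fun r => ⟪v, pder φ r x⟫) s).symm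
  simp [fderiv_apply_eq_sum_pder, inner_sum, real_inner_smul_right, hw]

end Frame

section Calculus

variable {φ : Euc m → Euc N} {x x₀ : Euc m}

lemma differentiableAt_pder (h : ContDiffAt ℝ 2 φ x₀) (i : Fin m) :
    DifferentiableAt ℝ (fun y => pder φ i y) x₀ :=
  ((h.fderiv_right (m := 1) (by norm_num)).differentiableAt one_ne_zero).clm_apply
    (differentiableAt_const _)

lemma fderiv_coord_apply {g : Euc m → Euc N} (hg : DifferentiableAt ℝ g x) (a : Fin N)
    (v : Euc m) : fderiv ℝ (fun y => g y a) x v = fderiv ℝ g x v a := by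
  have h : HasFDerivAt (fun y => g y a) ((EuclideanSpace.proj a).comp (fderiv ℝ g x)) x :=
    (EuclideanSpace.proj a : Euc N →L[ℝ] ℝ).hasFDerivAt.comp x hg.hasFDerivAt
  rw [h.fderiv]
  rfl

lemma spder_coord (hx : DifferentiableAt ℝ φ x) (a : Fin N) (i : Fin m) :
    spder (fun y => φ y a) i x = pder φ i x a :=
  fderiv_coord_apply hx a _

lemma spder2_coord (h : ContDiffAt ℝ 2 φ x₀) (a : Fin N) (i j : Fin m) :
    spder2 (fun y => φ y a) i j x₀ = pder2 φ i j x₀ a := by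
  have hev : (fun y => spder (fun y' => φ y' a) i y) =ᶠ[nhds x₀] fun y => pder φ i y a :=
    (h.eventually (by simp)).mono fun y hy => spder_coord (hy.differentiableAt two_ne_zero) a i
  rw [spder2, hev.fderiv_eq, fderiv_coord_apply (differentiableAt_pder h i)]
  rfl

lemma lapCoord_coord (h : ContDiffAt ℝ 2 φ x₀) (hdet : IsUnit (gram φ x₀).det) (a : Fin N) :
    lapCoord φ (fun y => φ y a) x₀ = meanCurvCoord φ x₀ a := by
  have hΓ : ∀ i j, ∑ l, christoffel φ x₀ l i j * spder (fun y => φ y a) l x₀ =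
      tproj φ x₀ (pder2 φ i j x₀) a := fun i j => by
    simp [tproj_eq_sum hdet, spder_coord (h.differentiableAt two_ne_zero), christoffel,
      Matrix.mulVec, dotProduct]
  simp [lapCoord, meanCurvCoord, sff, nproj, hΓ, spder2_coord h]

lemma gradInnerCoord_coord (hdet : IsUnit (gram φ x).det) (hx : DifferentiableAt ℝ φ x)
    {w : Euc m → ℝ} {v : Euc N} (hw : ∀ i, spder w i x = ⟪v, pder φ i x⟫) (a : Fin N) :
    gradInnerCoord φ w (fun y => φ y a) x = tproj φ x v a := by
  simp only [gradInnerCoord, tproj_eq_sum hdet, hw, spder_coord hx]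
  rw [Finset.sum_comm]
  simp [Matrix.mulVec, dotProduct, Finset.sum_mul, ginv_symm φ x]

section ConstantQuadraticForm

variable {B : Euc N →L[ℝ] Euc N →L[ℝ] ℝ} (hB : ∀ u v, B u v = B v u)
include hB

lemma spder_bilin_self (hx : DifferentiableAt ℝ φ x) (i : Fin m) :
    spder (fun y => B (φ y) (φ y)) i x = 2 * B (φ x) (pder φ i x) := by
  rw [spder, B.fderiv_of_bilinear hx hx]
  simp [pder, hB (fderiv ℝ φ x (ebasis m i))]
  ring

variable {c : ℝ} (hc : ∀ y, B (φ y) (φ y) = c)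
include hc

lemma bilin_pder_eq_zero_of_const (x : Euc m) (i : Fin m) : B (φ x) (pder φ i x) = 0 := by
  by_cases hx : DifferentiableAt ℝ φ x
  · have h := spder_bilin_self hB hx i
    rw [show (fun y => B (φ y) (φ y)) = fun _ => c from funext hc, spder, fderiv_const_apply] at h
    simpa using h
  · -- off the differentiability locus `pder` is the junk value `0`
    simp [pder, fderiv_zero_of_not_differentiableAt hx]

lemma bilin_pder2_eq_of_const (h : ContDiffAt ℝ 2 φ x₀) (i j : Fin m) :
    B (φ x₀) (pder2 φ i j x₀) = -B (pder φ i x₀) (pder φ j x₀) := by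
  have h0 : fderiv ℝ (fun y => B (φ y) (pder φ i y)) x₀ = 0 := by
    rw [show (fun y => B (φ y) (pder φ i y)) = fun _ => 0 from
      funext fun y => bilin_pder_eq_zero_of_const hB hc y i, fderiv_const_apply]
  rw [B.fderiv_of_bilinear (h.differentiableAt two_ne_zero) (differentiableAt_pder h i)] at h0
  have h1 := DFunLike.congr_fun h0 (ebasis m j)
  simp only [add_apply, ContinuousLinearMap.precompR_apply,
    ContinuousLinearMap.precompL_apply, zero_apply,
    ContinuousLinearMap.compL_apply, ContinuousLinearMap.coe_comp, Function.comp_apply] at h1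
  change B (φ x₀) (pder2 φ i j x₀) + B (pder φ j x₀) (pder φ i x₀) = 0 at h1
  rw [hB (pder φ i x₀)]
  exact eq_neg_of_add_eq_zero_left h1

lemma bilin_eq_zero_of_mem_tanSpace_of_const (x : Euc m) {w : Euc N} (hw : w ∈ tanSpace φ x) :
    B (φ x) w = 0 := by
  obtain ⟨v, rfl⟩ := hw
  simp [fderiv_apply_eq_sum_pder, bilin_pder_eq_zero_of_const hB hc]

lemma bilin_meanCurvCoord_eq_of_const (h : ContDiffAt ℝ 2 φ x₀) :
    B (φ x₀) (meanCurvCoord φ x₀) =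
      -∑ i, ∑ j, ginv φ x₀ i j * B (pder φ i x₀) (pder φ j x₀) := by
  simp [meanCurvCoord, sff, nproj, bilin_pder2_eq_of_const hB hc h,
    bilin_eq_zero_of_mem_tanSpace_of_const hB hc x₀ (tproj_mem_tanSpace φ x₀ _)]

end ConstantQuadraticForm

end Calculus

section Cylinder

variable {a b : ℕ}

def coordPairing {n : ℕ} (e : Fin n → Fin N) : Euc N →L[ℝ] Euc N →L[ℝ] ℝ :=
  ∑ j, (ContinuousLinearMap.mul ℝ ℝ).bilinearComp (EuclideanSpace.proj (e j))
    (EuclideanSpace.proj (e j))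

lemma coordPairing_apply {n : ℕ} (e : Fin n → Fin N) (u v : Euc N) :
    coordPairing e u v = ∑ j, u (e j) * v (e j) := by
  simp [coordPairing]

lemma coordPairing_comm {n : ℕ} (e : Fin n → Fin N) (u v : Euc N) :
    coordPairing e u v = coordPairing e v u := by
  simp only [coordPairing_apply, mul_comm]

lemma yinner_eq_coordPairing (z w : Euc (a + b)) :
    yinner a b z w = coordPairing (Fin.natAdd a) z w :=
  (coordPairing_apply _ z w).symm

lemma xnormSq_eq_coordPairing (z : Euc (a + b)) :
    xnormSq a b z = coordPairing (Fin.castAdd b) z z := by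
  simp [xnormSq, coordPairing_apply, sq]

lemma inner_xembed (z v : Euc (a + b)) :
    ⟪xembed a b z, v⟫ = coordPairing (Fin.castAdd b) z v := by
  simp [xembed, coordPairing_apply, PiLp.inner_apply, Fin.sum_univ_add, mul_comm]

lemma spder_xnormSq_div_four {φ : Euc m → Euc (a + b)} {x : Euc m}
    (hx : DifferentiableAt ℝ φ x) (i : Fin m) :
    spder (fun y => xnormSq a b (φ y) / 4) i x = ⟪(2⁻¹ : ℝ) • xembed a b (φ x), pder φ i x⟫ := by
  have h := spder_bilin_self (coordPairing_comm (Fin.castAdd b)) hx i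
  have hd : DifferentiableAt ℝ (fun y => coordPairing (Fin.castAdd b) (φ y) (φ y)) x :=
    ((coordPairing _).differentiableAt.comp x hx).clm_apply hx
  simp only [spder, xnormSq_eq_coordPairing, div_eq_mul_inv] at h ⊢
  rw [fderiv_mul_const hd, smul_apply, h, real_inner_smul_left, inner_xembed, smul_eq_mul]
  ring

end Cylinder

section Manifold

variable {M : Type*} [TopologicalSpace M] [ChartedSpace (Euc m) M]

lemma chmap_chpt (F : M → Euc N) (q : M) : chmap m F q (chpt m q) = F q :=
  congrArg F ((extChartAt (𝓡 m) q).left_inv (mem_extChartAt_source q))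

lemma contDiffAt_chmap {F : M → Euc N} (hF : ContMDiff (𝓡 m) 𝓘(ℝ, Euc N) (⊤ : ℕ∞) F)
    (q : M) : ContDiffAt ℝ 2 (chmap m F q) (chpt m q) := by
  have h := (contMDiffAt_iff.1 (hF q)).2
  simp only [extChartAt_model_space_eq_id, PartialEquiv.refl_coe, Function.id_comp,
    ModelWithCorners.range_eq_univ, contDiffWithinAt_univ] at h
  exact h.of_le (WithTop.coe_le_coe.2 le_top)

lemma mfderiv_eq_fderiv_chmap {F : M → Euc N}
    (hF : ContMDiff (𝓡 m) 𝓘(ℝ, Euc N) (⊤ : ℕ∞) F) (q : M) :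
    mfderiv (𝓡 m) 𝓘(ℝ, Euc N) F q = fderiv ℝ (chmap m F q) (chpt m q) := by
  rw [((hF q).mdifferentiableAt (by simp)).mfderiv, ModelWithCorners.range_eq_univ,
    fderivWithin_univ]
  rfl

lemma injective_fderiv_chmap {F : M → Euc N} (hF : IsSmoothImmersion m F) (q : M) :
    Function.Injective (fderiv ℝ (chmap m F q) (chpt m q)) :=
  mfderiv_eq_fderiv_chmap hF.1 q ▸ hF.2 q

variable {a b : ℕ} {F : M → Euc (a + b)}

lemma driftLap_coord (hF : IsSmoothImmersion m F) {fM : M → ℝ}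
    (hfM : ∀ q, fM q = xnormSq a b (F q) / 4) (q : M) (t : Fin (a + b)) :
    driftLap m F fM (fun q' => F q' t) q =
      (mcv m F q - tproj (chmap m F q) (chpt m q) ((2⁻¹ : ℝ) • xembed a b (F q))) t := by
  have hφ := contDiffAt_chmap hF.1 q
  have hdet := isUnit_det_gram (injective_fderiv_chmap hF q)
  have hpull : pull m fM q = fun y => xnormSq a b (chmap m F q y) / 4 := funext fun _ => hfM _
  have hgrad := spder_xnormSq_div_four (hφ.differentiableAt two_ne_zero)
  rw [chmap_chpt] at hgrad
  calc driftLap m F fM (fun q' => F q' t) q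
      = lapCoord (chmap m F q) (fun y => chmap m F q y t) (chpt m q) -
          gradInnerCoord (chmap m F q) (fun y => xnormSq a b (chmap m F q y) / 4)
            (fun y => chmap m F q y t) (chpt m q) := by rw [← hpull]; rfl
    _ = _ := by
      rw [lapCoord_coord hφ hdet,
        gradInnerCoord_coord hdet (hφ.differentiableAt two_ne_zero) hgrad]
      rfl

lemma yinner_mcv_eq_neg_sphTrace (hF : IsSmoothImmersion m F) {R : ℝ}
    (hcyl : ∀ q, F q ∈ cylSet a b R) (q : M) :
    yinner a b (mcv m F q) (F q) = -sphTrace a b m F q := by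
  have hc : ∀ y, coordPairing (Fin.natAdd a) (chmap m F q y) (chmap m F q y) = R ^ 2 :=
    fun y => by
      simpa [cylSet, ynormSq, coordPairing_apply, sq, chmap] using
        hcyl ((extChartAt (𝓡 m) q).symm y)
  have h := bilin_meanCurvCoord_eq_of_const (coordPairing_comm _) hc (contDiffAt_chmap hF.1 q)
  rw [chmap_chpt] at h
  simp only [yinner_eq_coordPairing, sphTrace, coordPairing_comm _ (mcv m F q)]
  exact h

lemma projCylT_mcv_add_nprojAt_apply (hF : IsSmoothImmersion m F) {R : ℝ}
    (hcyl : ∀ q, F q ∈ cylSet a b R) {fM : M → ℝ} (hfM : ∀ q, fM q = xnormSq a b (F q) / 4)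
    (q : M) (t : Fin (a + b)) :
    (projCylT a b (F q) (mcv m F q) + nprojAt m F q ((2⁻¹ : ℝ) • xembed a b (F q))) t =
      driftLap m F fM (fun q' => F q' t) q + 2⁻¹ * xembed a b (F q) t
        + sphTrace a b m F q / R ^ 2 * yembed a b (F q) t := by
  have hy : ynormSq a b (F q) = R ^ 2 := hcyl q
  rw [driftLap_coord hF hfM]
  simp [projCylT, nprojAt, nproj, yinner_mcv_eq_neg_sphTrace hF hcyl, hy]
  ring

lemma cylShrinkEqnAt_iff (hF : IsSmoothImmersion m F) {R : ℝ}
    (hcyl : ∀ q, F q ∈ cylSet a b R) {fM : M → ℝ} (hfM : ∀ q, fM q = xnormSq a b (F q) / 4)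
    (q : M) :
    CylShrinkEqnAt a b m F q ↔
      (∀ i : Fin a, driftLap m F fM (fun q' => F q' (Fin.castAdd b i)) q
          = -(2⁻¹ : ℝ) * F q (Fin.castAdd b i)) ∧
      (∀ i : Fin b, driftLap m F fM (fun q' => F q' (Fin.natAdd a i)) q
          = -((1 / R ^ 2) * sphTrace a b m F q) * F q (Fin.natAdd a i)) := by
  rw [CylShrinkEqnAt, WithLp.ext_iff, funext_iff, Fin.forall_fin_add]
  simp only [projCylT_mcv_add_nprojAt_apply hF hcyl hfM, one_div_mul_eq_div]
  refine and_congr (forall_congr' fun i => ?_) (forall_congr' fun i => ?_) <;>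
    simp [xembed, yembed, neg_mul, eq_neg_iff_add_eq_zero]

end Manifold

end ShrinkerPaper

open ShrinkerPaper in
theorem cylShrinker_iff_coordinates_eigenfunctions_general
    {p k m : ℕ} (hk : 2 ≤ k) {M : Type*} [TopologicalSpace M]
    [ChartedSpace (Euc m) M]
    (F : M → Euc (p + (k + 1)))
    (himm : IsSmoothImmersion m F)
    (hcyl : ∀ q : M, F q ∈ cylSet p (k + 1) (Real.sqrt (2 * ((k : ℝ) - 1))))
    (fM : M → ℝ) (hfM : ∀ q : M, fM q = xnormSq p (k + 1) (F q) / 4) :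
    (∀ q : M, CylShrinkEqnAt p (k + 1) m F q) ↔
      ((∀ i : Fin p, ∀ q : M,
          driftLap m F fM (fun q' => F q' (Fin.castAdd (k + 1) i)) q
            = -(2⁻¹ : ℝ) * F q (Fin.castAdd (k + 1) i)) ∧
       (∀ i : Fin (k + 1), ∀ q : M,
          driftLap m F fM (fun q' => F q' (Fin.natAdd p i)) q
            = -((1 / (2 * ((k : ℝ) - 1))) * sphTrace p (k + 1) m F q)
                * F q (Fin.natAdd p i))) := by
  have hR : Real.sqrt (2 * ((k : ℝ) - 1)) ^ 2 = 2 * ((k : ℝ) - 1) :=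
    Real.sq_sqrt (by linarith [(Nat.ofNat_le_cast.2 hk : (2 : ℝ) ≤ k)])
  simp only [cylShrinkEqnAt_iff himm hcyl hfM, hR, forall_and]
  exact and_congr forall_comm forall_comm

open ShrinkerPaper in
/-- A submanifold of the gradient shrinking Ricci soliton
`ℝ^p × S^k_{√(2(k-1))}` (with `f(x,y) = |x|²/4`) is a self-shrinker iff the cartesian
coordinates `x₁, …, x_p` of `ℝ^p` satisfy `Δ_f x_i = -(1/2) x_i` and the cartesian coordinates
`y₁, …, y_{k+1}` of `ℝ^{k+1}` satisfy `Δ_f y_i = -((1/(2(k-1))) tr_M g_{S^k}) y_i`. -/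
theorem cylShrinker_iff_coordinates_eigenfunctions
    {p k m : ℕ} (hk : 2 ≤ k) {M : Type*} [TopologicalSpace M]
    [ChartedSpace (Euc m) M] [IsManifold (𝓡 m) ((⊤ : ℕ∞) : WithTop ℕ∞) M]
    (F : M → Euc (p + (k + 1)))
    (himm : IsSmoothImmersion m F)
    (hcyl : ∀ q : M, F q ∈ cylSet p (k + 1) (Real.sqrt (2 * ((k : ℝ) - 1))))
    (fM : M → ℝ) (hfM : ∀ q : M, fM q = xnormSq p (k + 1) (F q) / 4) :
    (∀ q : M, CylShrinkEqnAt p (k + 1) m F q) ↔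
      ((∀ i : Fin p, ∀ q : M,
          driftLap m F fM (fun q' => F q' (Fin.castAdd (k + 1) i)) q
            = -(2⁻¹ : ℝ) * F q (Fin.castAdd (k + 1) i)) ∧
       (∀ i : Fin (k + 1), ∀ q : M,
          driftLap m F fM (fun q' => F q' (Fin.natAdd p i)) q
            = -((1 / (2 * ((k : ℝ) - 1))) * sphTrace p (k + 1) m F q)
                * F q (Fin.natAdd p i))) :=
  cylShrinker_iff_coordinates_eigenfunctions_general hk F himm hcyl fM hfM
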